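/- arXiv:2011.02408 — 7 statements merged into one kernel-verified Lean document; each statement's English description precedes it below -/
import Mathlib

section
/- Let Φ ∈ ℝ^{N×P} with ΦΦᵀ invertible (hence symmetric positive definite), let λ_max denote the largest eigenvalue of ΦΦᵀ, let Ŷ ∈ ℝ^N, θ₀ ∈ ℝ^P, and let 0 < η < 2N/λ_max. Then the gradient-descent iterates θ_{t+1} = θ_t − (η/N) Φᵀ(Φθ_t − Ŷ) converge as t → ∞ to θ∞ = θ₀ + Φᵀ(ΦΦᵀ)⁻¹(Ŷ − Φθ₀); in particular Φθ∞ = Ŷ, so the limit interpolates the training data. -/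
open Matrix Filter

/-- **Convergence of gradient descent on an overparameterized linear model.**
If `ΦΦᵀ` is invertible, `λmax` is its largest eigenvalue, and `0 < η < 2N/λmax`, then the
gradient-descent iterates `θ_{t+1} = θ_t − (η/N) Φᵀ(Φθ_t − Yhat)` converge to
`θ∞ = θ₀ + Φᵀ(ΦΦᵀ)⁻¹(Yhat − Φθ₀)`, which interpolates: `Φθ∞ = Yhat`. -/
theorem gd_convergence {N P : ℕ} (hN : 1 ≤ N) (Φ : Matrix (Fin N) (Fin P) ℝ)
    (hinv : IsUnit (Φ * Φᵀ).det) (lammax : ℝ)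
    (hmax_eig : ∃ v : Fin N → ℝ, v ≠ 0 ∧ (Φ * Φᵀ).mulVec v = lammax • v)
    (hmax_ub : ∀ (μ : ℝ) (v : Fin N → ℝ), v ≠ 0 → (Φ * Φᵀ).mulVec v = μ • v → μ ≤ lammax)
    (Yhat : Fin N → ℝ) (θ₀ : Fin P → ℝ) (η : ℝ) (hη₀ : 0 < η) (hη₁ : η < 2 * N / lammax)
    (θ : ℕ → Fin P → ℝ) (h0 : θ 0 = θ₀)
    (hstep : ∀ t, θ (t + 1) = θ t - (η / N) • Φᵀ.mulVec (Φ.mulVec (θ t) - Yhat)) :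
    Tendsto θ atTop (nhds (θ₀ + (Φᵀ * (Φ * Φᵀ)⁻¹).mulVec (Yhat - Φ.mulVec θ₀))) ∧
      Φ.mulVec (θ₀ + (Φᵀ * (Φ * Φᵀ)⁻¹).mulVec (Yhat - Φ.mulVec θ₀)) = Yhat := by
  set A : Matrix (Fin N) (Fin N) ℝ := Φ * Φᵀ with hAdef
  have htr : Φᵀ = Φᴴ := (conjTranspose_eq_transpose_of_trivial Φ).symm
  have hA : A.IsHermitian := by
    rw [hAdef, htr]; exact isHermitian_mul_conjTranspose_self Φ
  have hPSD : A.PosSemidef := by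
    rw [hAdef, htr]; exact posSemidef_self_mul_conjTranspose Φ
  -- eigenvalues are positive and bounded by lammax
  have heig_pos : ∀ i, 0 < hA.eigenvalues i := by
    intro i
    rcases lt_or_eq_of_le (hPSD.eigenvalues_nonneg i) with h | h
    · exact h
    · exfalso
      have hdet : A.det = ∏ i, (hA.eigenvalues i : ℝ) := hA.det_eq_prod_eigenvalues
      have : A.det = 0 := by
        rw [hdet]
        exact Finset.prod_eq_zero (Finset.mem_univ i) (by simp [← h])
      exact hinv.ne_zero (by simpa using this)
  have heig_ub : ∀ i, hA.eigenvalues i ≤ lammax := by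
    intro i
    apply hmax_ub (hA.eigenvalues i) (hA.eigenvectorBasis i)
    · intro hzero
      exact hA.eigenvectorBasis.orthonormal.ne_zero i (by ext j; exact congrFun hzero j)
    · exact hA.mulVec_eigenvectorBasis i
  have hNpos : (0 : ℝ) < N := by exact_mod_cast hN
  have hlammax_pos : 0 < lammax :=
    lt_of_lt_of_le (heig_pos ⟨0, hN⟩) (heig_ub ⟨0, hN⟩)
  have hetalam : η * lammax < 2 * N := by
    rwa [lt_div_iff₀ hlammax_pos] at hη₁
  -- contraction factors
  set c : ℝ := η / N with hcdef
  have hcpos : 0 < c := div_pos hη₀ hNpos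
  have hgabs : ∀ i, |1 - c * hA.eigenvalues i| < 1 := by
    intro i
    rw [abs_lt]
    constructor
    · have h1 : η * hA.eigenvalues i ≤ η * lammax :=
        mul_le_mul_of_nonneg_left (heig_ub i) hη₀.le
      have h2 : c * hA.eigenvalues i < 2 := by
        rw [hcdef, div_mul_eq_mul_div, div_lt_iff₀ hNpos]
        calc η * hA.eigenvalues i ≤ η * lammax := h1
          _ < 2 * N := hetalam
      linarith
    · have : 0 < c * hA.eigenvalues i := mul_pos hcpos (heig_pos i)
      linarith
  -- the iteration matrix
  set M : Matrix (Fin N) (Fin N) ℝ := 1 - c • A with hMdef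
  set U : Matrix (Fin N) (Fin N) ℝ := (hA.eigenvectorUnitary : Matrix (Fin N) (Fin N) ℝ) with hUdef
  have hUU : U * star U = 1 := (Matrix.mem_unitaryGroup_iff).mp hA.eigenvectorUnitary.2
  have hUU' : star U * U = 1 := (Matrix.mem_unitaryGroup_iff').mp hA.eigenvectorUnitary.2
  have hspec : A = U * diagonal hA.eigenvalues * star U := by
    have := hA.spectral_theorem
    simpa [RCLike.ofReal_real_eq_id, Function.comp] using this
  have hMspec : M = U * diagonal (fun i => 1 - c * hA.eigenvalues i) * star U := by
    rw [hMdef]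
    conv_lhs => rw [hspec]
    have h1 : (1 : Matrix (Fin N) (Fin N) ℝ) = U * 1 * star U := by
      rw [mul_one, hUU]
    calc (1 : Matrix (Fin N) (Fin N) ℝ) - c • (U * diagonal hA.eigenvalues * star U)
        = U * 1 * star U - U * (c • diagonal hA.eigenvalues) * star U := by
          rw [← h1, mul_smul_comm, smul_mul_assoc]
      _ = U * (1 - c • diagonal hA.eigenvalues) * star U := by
          rw [mul_sub, sub_mul]
      _ = U * diagonal (fun i => 1 - c * hA.eigenvalues i) * star U := by
          congr 1
          congr 1
          rw [← diagonal_one, ← diagonal_smul, ← diagonal_sub]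
          rfl
  have hMpow : ∀ t, M ^ t = U * diagonal (fun i => (1 - c * hA.eigenvalues i) ^ t) * star U := by
    intro t
    induction t with
    | zero => simp [hUU]
    | succ t ih =>
      have hconj : ∀ (B C' : Matrix (Fin N) (Fin N) ℝ),
          (U * B * star U) * (U * C' * star U) = U * (B * C') * star U := by
        intro B C'
        calc (U * B * star U) * (U * C' * star U)
            = (U * B) * (star U * U) * (C' * star U) := by noncomm_ring
          _ = U * (B * C') * star U := by rw [hUU', mul_one]; noncomm_ring
      rw [pow_succ, ih, hMspec, hconj, diagonal_mul_diagonal,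
        show (fun i => (1 - c * hA.eigenvalues i) ^ t * (1 - c * hA.eigenvalues i))
          = fun i => (1 - c * hA.eigenvalues i) ^ (t + 1) from
          funext fun i => (pow_succ _ _).symm]
  -- M^t → 0
  have hMtendsto : Tendsto (fun t => M ^ t) atTop (nhds 0) := by
    have hd : Tendsto (fun t => (fun i => (1 - c * hA.eigenvalues i) ^ t)) atTop
        (nhds (0 : Fin N → ℝ)) := by
      rw [tendsto_pi_nhds]
      intro i
      simpa using tendsto_pow_atTop_nhds_zero_of_abs_lt_one (hgabs i)
    have hF : Continuous (fun d : Fin N → ℝ => U * diagonal d * star U) :=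
      (continuous_const.matrix_mul (continuous_id.matrix_diagonal)).matrix_mul continuous_const
    have := (hF.tendsto 0).comp hd
    have h0' : U * diagonal (0 : Fin N → ℝ) * star U = 0 := by
      simp [show (0 : Fin N → ℝ) = fun _ => (0:ℝ) from rfl]
    rw [h0'] at this
    exact this.congr fun t => (hMpow t).symm
  -- closed form for the iterates
  set C : Matrix (Fin P) (Fin N) ℝ := Φᵀ * A⁻¹ with hCdef
  set r₀ : Fin N → ℝ := Φ.mulVec θ₀ - Yhat with hr₀def
  have hΦC : Φ * C = 1 := by
    rw [hCdef, ← Matrix.mul_assoc, ← hAdef, mul_nonsing_inv A hinv]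
  have hCA : C * A = Φᵀ := by
    rw [hCdef, Matrix.mul_assoc, nonsing_inv_mul A hinv, Matrix.mul_one]
  have key : ∀ t, C * (1 - M ^ (t + 1)) = C * (1 - M ^ t) + c • (Φᵀ * M ^ t) := by
    intro t
    have h1 : M ^ (t + 1) = M ^ t - c • (A * M ^ t) := by
      rw [pow_succ', hMdef, sub_mul, one_mul, smul_mul_assoc]
    rw [h1]
    have h2 : C * (A * M ^ t) = Φᵀ * M ^ t := by
      rw [← Matrix.mul_assoc, hCA]
    calc C * (1 - (M ^ t - c • (A * M ^ t)))
        = C * (1 - M ^ t) + c • (C * (A * M ^ t)) := by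
          simp only [Matrix.mul_sub, Matrix.mul_smul]
          abel
      _ = C * (1 - M ^ t) + c • (Φᵀ * M ^ t) := by rw [h2]
  have hform : ∀ t, θ t = θ₀ - (C * (1 - M ^ t)).mulVec r₀ := by
    intro t
    induction t with
    | zero => simp [h0]
    | succ t ih =>
      have hres : Φ.mulVec (θ t) - Yhat = (M ^ t).mulVec r₀ := by
        rw [ih, mulVec_sub, mulVec_mulVec, ← Matrix.mul_assoc, hΦC, one_mul]
        rw [hr₀def, sub_mulVec, one_mulVec, mulVec_sub]
        abel
      rw [hstep t, hres, ih, key t, add_mulVec, smul_mulVec, mulVec_mulVec,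
        sub_add_eq_sub_sub]
  -- conclude
  constructor
  · have hG : Continuous (fun X : Matrix (Fin N) (Fin N) ℝ => θ₀ - (C * (1 - X)).mulVec r₀) :=
      continuous_const.sub
        (((continuous_const.matrix_mul (continuous_const.sub continuous_id)).matrix_mulVec
          continuous_const))
    have := (hG.tendsto 0).comp hMtendsto
    have hlim : θ₀ - (C * (1 - (0 : Matrix (Fin N) (Fin N) ℝ))).mulVec r₀
        = θ₀ + (Φᵀ * (Φ * Φᵀ)⁻¹).mulVec (Yhat - Φ.mulVec θ₀) := by
      rw [sub_zero, Matrix.mul_one, hCdef, ← hAdef, hr₀def]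
      rw [sub_eq_add_neg, ← mulVec_neg, neg_sub]
    rw [hlim] at this
    exact this.congr fun t => (hform t).symm
  · rw [mulVec_add, mulVec_mulVec, ← Matrix.mul_assoc, ← hAdef, mul_nonsing_inv A hinv, one_mulVec]
    abel
end

section
/- Let f_W(x) = W^L relu(W^{L−1} ⋯ relu(W¹ x)) be a zero-bias L-layer ReLU network, and fix an input x and weights W = (W¹,…,W^L) such that every pre-activation coordinate hˡ_i(x) is nonzero for all hidden layers l = 1,…,L−1. Then the map W ↦ f_W(x) is differentiable at W, for each layer l the Euclidean inner product of Wˡ with the partial gradient ∇_{Wˡ} f_W(x) equals f_W(x), and consequently ⟨W, ∇_W f_W(x)⟩ = L · f_W(x). -/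
open Matrix

attribute [local instance] Matrix.frobeniusNormedAddCommGroup Matrix.frobeniusNormedSpace

/-- Pre-activations of a zero-bias fully-connected ReLU network:
`reluNetPre dims W x l` is `h^{l+1}(x)`, where `h¹(x) = W¹x` and
`hˡ(x) = Wˡ · relu(h^{l−1}(x))`. -/
def reluNetPre (dims : ℕ → ℕ)
    (W : ∀ l : ℕ, Matrix (Fin (dims (l + 1))) (Fin (dims l)) ℝ)
    (x : Fin (dims 0) → ℝ) : (l : ℕ) → Fin (dims (l + 1)) → ℝ
  | 0 => (W 0).mulVec x
  | l + 1 => (W (l + 1)).mulVec fun i => max (reluNetPre dims W x l i) 0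

/-- Extend a finitely-indexed collection of weight matrices to all of `ℕ` (by zero). -/
def extendWeights (dims : ℕ → ℕ) (L : ℕ)
    (W : ∀ l : Fin L, Matrix (Fin (dims (↑l + 1))) (Fin (dims ↑l)) ℝ) :
    ∀ l : ℕ, Matrix (Fin (dims (l + 1))) (Fin (dims l)) ℝ :=
  fun l => if h : l < L then W ⟨l, h⟩ else 0

/-- The (scalar) output `f_W(x) = h^L(x)` of the `L`-layer zero-bias ReLU network, as a
function of all the weight matrices `W = (W¹, …, W^L)`; the output layer has width
`dims L = 1` and we sum over its (single) coordinate. -/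
def reluNetOut (dims : ℕ → ℕ) (L : ℕ) (x : Fin (dims 0) → ℝ)
    (W : ∀ l : Fin L, Matrix (Fin (dims (↑l + 1))) (Fin (dims ↑l)) ℝ) : ℝ :=
  ∑ i, reluNetPre dims (extendWeights dims L W) x (L - 1) i

/-!
Away from `0` the ReLU is differentiable, so layer by layer every pre-activation, and hence
`f_W(x)`, is differentiable in `W` at `W`. Since ReLU is positively homogeneous, replacing the
layer `Wˡ` by `c • Wˡ` with `c ≥ 0` multiplies the output by `c`; differentiating along this ray
at `c = 1` gives `⟨Wˡ, ∇_{Wˡ} f⟩ = f`, and summing over the layers gives `L · f`.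
-/

open Topology

section General

variable {E : Type*} [NormedAddCommGroup E] [NormedSpace ℝ E]

theorem Pi.add_smul_single_self_eq_update {R ι : Type*} {M : ι → Type*} [Ring R] [DecidableEq ι]
    [∀ i, AddCommGroup (M i)] [∀ i, Module R (M i)] (f : ∀ i, M i) (i : ι) (t : R) :
    f + t • (Pi.single i (f i) : ∀ i, M i) = Function.update f i ((1 + t) • f i) := by
  funext k
  by_cases hk : k = i
  · subst hk
    simp [add_smul]
  · simp [hk]

theorem DifferentiableAt.max_zero_of_ne {g : E → ℝ} {w : E} (hg : DifferentiableAt ℝ g w)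
    (hw : g w ≠ 0) : DifferentiableAt ℝ (fun y => max (g y) 0) w := by
  rcases hw.lt_or_gt with hneg | hpos
  · refine (differentiableAt_const (0 : ℝ)).congr_of_eventuallyEq ?_
    filter_upwards [hg.continuousAt.eventually (eventually_lt_nhds hneg)] with y hy
    exact max_eq_right hy.le
  · refine hg.congr_of_eventuallyEq ?_
    filter_upwards [hg.continuousAt.eventually (eventually_gt_nhds hpos)] with y hy
    exact max_eq_left hy.le

theorem HasFDerivAt.apply_eq_of_eventually_homogeneous {f : E → ℝ} {f' : E →L[ℝ] ℝ} {w v : E}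
    (hf : HasFDerivAt f f' w) (hv : ∀ᶠ t in 𝓝 (0 : ℝ), f (w + t • v) = (1 + t) * f w) :
    f' v = f w := by
  have hline : HasLineDerivAt ℝ f (f w) w v := by
    refine HasDerivAt.congr_of_eventuallyEq ?_ hv
    simpa using ((hasDerivAt_id (0 : ℝ)).const_add 1).mul_const (f w)
  exact (hf.hasLineDerivAt v).unique hline

end General

section ReluNet

variable {E : Type*} [NormedAddCommGroup E] [NormedSpace ℝ E]
  {dims : ℕ → ℕ} {x : Fin (dims 0) → ℝ}

theorem reluNetPre_congr {W W' : ∀ l : ℕ, Matrix (Fin (dims (l + 1))) (Fin (dims l)) ℝ} {m : ℕ}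
    (h : ∀ j ≤ m, W j = W' j) : reluNetPre dims W x m = reluNetPre dims W' x m := by
  induction m with
  | zero => simp only [reluNetPre, h 0 le_rfl]
  | succ m ih =>
    simp only [reluNetPre, h (m + 1) le_rfl, ih fun j hj => h j (hj.trans m.le_succ)]

theorem reluNetPre_update_smul (W : ∀ l : ℕ, Matrix (Fin (dims (l + 1))) (Fin (dims l)) ℝ)
    {k m : ℕ} (hkm : k ≤ m) {c : ℝ} (hc : 0 ≤ c) :
    reluNetPre dims (Function.update W k (c • W k)) x m = c • reluNetPre dims W x m := by
  induction m, hkm using Nat.le_induction with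
  | base =>
    cases k with
    | zero => simp only [reluNetPre, Function.update_self, Matrix.smul_mulVec]
    | succ k =>
      rw [reluNetPre, reluNetPre, Function.update_self, Matrix.smul_mulVec,
        reluNetPre_congr (W' := W) fun j hj =>
          Function.update_of_ne (show j ≠ k + 1 by omega) _ _]
  | succ m hkm ih =>
    have relu_smul : (fun i => max ((c • reluNetPre dims W x m) i) 0) =
        c • fun i => max (reluNetPre dims W x m i) 0 := by
      funext i
      simp only [Pi.smul_apply, smul_eq_mul, mul_max_of_nonneg _ _ hc, mul_zero]
    rw [reluNetPre, reluNetPre, ih, Function.update_of_ne (by omega), relu_smul,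
      Matrix.mulVec_smul]

theorem extendWeights_update (L : ℕ)
    (W : ∀ l : Fin L, Matrix (Fin (dims (↑l + 1))) (Fin (dims ↑l)) ℝ) (l : Fin L)
    (A : Matrix (Fin (dims (↑l + 1))) (Fin (dims ↑l)) ℝ) :
    extendWeights dims L (Function.update W l A) =
      Function.update (extendWeights dims L W) l A := by
  funext k
  unfold extendWeights
  by_cases hk : k = l
  · subst hk
    simp
  · rw [Function.update_of_ne hk]
    split_ifs with h
    · rw [Function.update_of_ne (fun e => hk (congrArg Fin.val e))]
    · rfl

theorem reluNetOut_update_smul (L : ℕ)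
    (W : ∀ l : Fin L, Matrix (Fin (dims (↑l + 1))) (Fin (dims ↑l)) ℝ) (l : Fin L)
    {c : ℝ} (hc : 0 ≤ c) :
    reluNetOut dims L x (Function.update W l (c • W l)) = c * reluNetOut dims L x W := by
  have hl : extendWeights dims L W l = W l := dif_pos l.isLt
  rw [reluNetOut, reluNetOut, Finset.mul_sum, extendWeights_update, ← hl,
    reluNetPre_update_smul _ (by omega) hc]
  rfl

theorem differentiableAt_reluNetPre
    {Φ : E → ∀ l : ℕ, Matrix (Fin (dims (l + 1))) (Fin (dims l)) ℝ} {w : E}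
    (hΦ : ∀ k i j, DifferentiableAt ℝ (fun p => Φ p k i j) w) {m : ℕ}
    (hact : ∀ l < m, ∀ i, reluNetPre dims (Φ w) x l i ≠ 0) (i : Fin (dims (m + 1))) :
    DifferentiableAt ℝ (fun p => reluNetPre dims (Φ p) x m i) w := by
  induction m with
  | zero =>
    simp only [reluNetPre, Matrix.mulVec, dotProduct]
    exact DifferentiableAt.fun_sum fun j _ => (hΦ 0 i j).mul_const _
  | succ m ih =>
    simp only [reluNetPre, Matrix.mulVec, dotProduct]
    exact DifferentiableAt.fun_sum fun j _ => (hΦ (m + 1) i j).mul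
      ((ih (fun l hl => hact l (hl.trans m.lt_succ_self)) j).max_zero_of_ne
        (hact m m.lt_succ_self j))

theorem differentiable_extendWeights_apply (L k : ℕ) (i : Fin (dims (k + 1)))
    (j : Fin (dims k)) :
    Differentiable ℝ fun W : ∀ l : Fin L, Matrix (Fin (dims (↑l + 1))) (Fin (dims ↑l)) ℝ =>
      extendWeights dims L W k i j := by
  unfold extendWeights
  split_ifs with h
  · exact ((Matrix.entryLinearMap ℝ ℝ i j).comp (LinearMap.proj (R := ℝ)
      (φ := fun l : Fin L => Matrix (Fin (dims (↑l + 1))) (Fin (dims ↑l)) ℝ) ⟨k, h⟩)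
      ).toContinuousLinearMap.differentiable
  · exact differentiable_const _

theorem differentiableAt_reluNetOut {L : ℕ}
    {W : ∀ l : Fin L, Matrix (Fin (dims (↑l + 1))) (Fin (dims ↑l)) ℝ}
    (hact : ∀ l : ℕ, l + 1 < L → ∀ i, reluNetPre dims (extendWeights dims L W) x l i ≠ 0) :
    DifferentiableAt ℝ (reluNetOut dims L x) W :=
  DifferentiableAt.fun_sum fun i _ =>
    differentiableAt_reluNetPre (fun k i j => differentiable_extendWeights_apply L k i j W)
      (fun l hl => hact l (by omega)) i

end ReluNet

theorem reluNet_euler_identity_general (dims : ℕ → ℕ) (L : ℕ)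
    (x : Fin (dims 0) → ℝ)
    (W : ∀ l : Fin L, Matrix (Fin (dims (↑l + 1))) (Fin (dims ↑l)) ℝ)
    (hact : ∀ l : ℕ, l + 1 < L → ∀ i, reluNetPre dims (extendWeights dims L W) x l i ≠ 0) :
    ∃ f' : (∀ l : Fin L, Matrix (Fin (dims (↑l + 1))) (Fin (dims ↑l)) ℝ) →L[ℝ] ℝ,
      HasFDerivAt (reluNetOut dims L x) f' W ∧
      (∀ l : Fin L, f' (Pi.single l (W l)) = reluNetOut dims L x W) ∧
      f' W = L * reluNetOut dims L x W := by
  have hf := (differentiableAt_reluNetOut hact).hasFDerivAt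
  have hlayer : ∀ l : Fin L, fderiv ℝ (reluNetOut dims L x) W (Pi.single l (W l)) =
      reluNetOut dims L x W := fun l =>
    hf.apply_eq_of_eventually_homogeneous <| by
      filter_upwards [eventually_ge_nhds (show (-1 : ℝ) < 0 by norm_num)] with t ht
      rw [Pi.add_smul_single_self_eq_update, reluNetOut_update_smul L W l (by linarith)]
  refine ⟨_, hf, hlayer, ?_⟩
  calc fderiv ℝ (reluNetOut dims L x) W W
      = ∑ l, fderiv ℝ (reluNetOut dims L x) W (Pi.single l (W l)) := by
        rw [← map_sum, Finset.univ_sum_single]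
    _ = L * reluNetOut dims L x W := by simp [hlayer]

/-- **Euler identity / local differentiability of ReLU networks in their parameters.**
If all hidden pre-activation coordinates are nonzero at `(W, x)`, then `W ↦ f_W(x)` is
differentiable at `W`; for each layer `l`, the Hilbert–Schmidt inner product of `Wˡ` with the
partial gradient `∇_{Wˡ} f_W(x)` (i.e. the derivative applied to `Pi.single l (W l)`) equals
`f_W(x)`; consequently the derivative applied to `W` itself equals `L · f_W(x)`. -/
theorem reluNet_euler_identity (dims : ℕ → ℕ) (L : ℕ) (hL : 1 ≤ L) (hout : dims L = 1)
    (x : Fin (dims 0) → ℝ)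
    (W : ∀ l : Fin L, Matrix (Fin (dims (↑l + 1))) (Fin (dims ↑l)) ℝ)
    (hact : ∀ l : ℕ, l + 1 < L → ∀ i, reluNetPre dims (extendWeights dims L W) x l i ≠ 0) :
    ∃ f' : (∀ l : Fin L, Matrix (Fin (dims (↑l + 1))) (Fin (dims ↑l)) ℝ) →L[ℝ] ℝ,
      HasFDerivAt (reluNetOut dims L x) f' W ∧
      (∀ l : Fin L, f' (Pi.single l (W l)) = reluNetOut dims L x W) ∧
      f' W = L * reluNetOut dims L x W :=
  reluNet_euler_identity_general dims L x W hact
end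

section
/- Let Φ ∈ ℝ^{N×P} with ΦΦᵀ invertible, let B ⊆ {1,…,N} be a batch with b = |B| ≥ 1, let P_B ∈ ℝ^{N×N} be the diagonal 0/1 matrix with (P_B)_{ii} = 1 iff i ∈ B, and define D_B := (N/b) (P_B Φ)ᵀ (ΦΦᵀ)⁻¹ Φ ∈ ℝ^{P×P}. Then for every θ ∈ ℝ^P, Ŷ ∈ ℝ^N and η > 0: (η/N) D_B Φᵀ (Φθ − Ŷ) = (η/b) (P_B Φ)ᵀ ( P_B Φ θ − P_B Ŷ ). That is, the adaptive full-gradient update with adaptive matrix D_B coincides exactly with the mini-batch SGD update on batch B. -/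
open Matrix

/-- The diagonal 0/1 projector `P_B` onto the coordinates of the batch `B`. -/
def batchProj {N : ℕ} (B : Finset (Fin N)) : Matrix (Fin N) (Fin N) ℝ :=
  Matrix.diagonal fun i => if i ∈ B then 1 else 0

/-- **Mini-batch SGD as an adaptive method.** With `D_B := (N/|B|)(P_B Φ)ᵀ(ΦΦᵀ)⁻¹Φ`, the
adaptive full-gradient update `(η/N) D_B Φᵀ(Φθ − Yhat)` equals the mini-batch SGD update
`(η/|B|)(P_B Φ)ᵀ(P_B Φ θ − P_B Yhat)`. -/
theorem sgd_is_adaptive {N P : ℕ} (hN : 0 < N) (Φ : Matrix (Fin N) (Fin P) ℝ)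
    (hinv : IsUnit (Φ * Φᵀ).det) (B : Finset (Fin N)) (hB : 1 ≤ B.card) :
    ∀ (θ : Fin P → ℝ) (Yhat : Fin N → ℝ) (η : ℝ), 0 < η →
      (η / N) • (((((N : ℝ) / B.card) • ((batchProj B * Φ)ᵀ * (Φ * Φᵀ)⁻¹ * Φ)) * Φᵀ).mulVec
          (Φ.mulVec θ - Yhat))
        = (η / B.card) • ((batchProj B * Φ)ᵀ).mulVec
            ((batchProj B * Φ).mulVec θ - (batchProj B).mulVec Yhat) := by
  intro θ Yhat η hη
  have hP : batchProj B * batchProj B = batchProj B := by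
    unfold batchProj
    rw [Matrix.diagonal_mul_diagonal]
    ext i j
    by_cases h : i ∈ B <;> simp [Matrix.diagonal_apply, h]
  have hPt : (batchProj B)ᵀ = batchProj B := by
    unfold batchProj; exact Matrix.diagonal_transpose _
  have hinvmul : (Φ * Φᵀ)⁻¹ * (Φ * Φᵀ) = 1 := Matrix.nonsing_inv_mul _ hinv
  have hmat : ((batchProj B * Φ)ᵀ * (Φ * Φᵀ)⁻¹ * Φ) * Φᵀ = Φᵀ * batchProj B := by
    calc ((batchProj B * Φ)ᵀ * (Φ * Φᵀ)⁻¹ * Φ) * Φᵀ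
        = (batchProj B * Φ)ᵀ * ((Φ * Φᵀ)⁻¹ * (Φ * Φᵀ)) := by
          simp only [Matrix.mul_assoc]
      _ = (batchProj B * Φ)ᵀ := by rw [hinvmul, Matrix.mul_one]
      _ = Φᵀ * batchProj B := by rw [Matrix.transpose_mul, hPt]
  have hNne : (N : ℝ) ≠ 0 := Nat.cast_ne_zero.mpr hN.ne'
  have hbne : (B.card : ℝ) ≠ 0 := Nat.cast_ne_zero.mpr (by omega)
  have hsc : η / N * ((N : ℝ) / B.card) = η / B.card := by
    field_simp
  have hrhs : (batchProj B * Φ).mulVec θ - (batchProj B).mulVec Yhat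
      = (batchProj B).mulVec (Φ.mulVec θ - Yhat) := by
    rw [Matrix.mulVec_sub, ← Matrix.mulVec_mulVec]
  rw [Matrix.smul_mul, Matrix.smul_mulVec, smul_smul, hsc, hmat, hrhs,
    Matrix.transpose_mul, hPt]
  congr 1
  rw [Matrix.mulVec_mulVec, Matrix.mul_assoc, hP]
end

section
/- Let G ∈ ℝ^{N×N}, let B₁,…,B_E be pairwise disjoint subsets of {1,…,N} whose union is {1,…,N}, let P_{B_z} be the corresponding diagonal 0/1 projectors (so Σ_{z=1}^{E} P_{B_z} = I and ‖P_{B_z}‖_op ≤ 1), and let η, b > 0. Then the ordered product over one epoch satisfies ‖ Π_{z=E}^{1} ( I − (η/b) G P_{B_z} ) ‖_op ≤ ‖ I − (η/b) G ‖_op + Σ_{z=2}^{E} C(E, z) ( (η/b) ‖G‖_op )^z, where C(E, z) is the binomial coefficient. -/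
open Matrix

/-- The ℓ²-operator (spectral) norm of a square real matrix. -/
noncomputable def l2OpNorm {n : ℕ} (M : Matrix (Fin n) (Fin n) ℝ) : ℝ :=
  ‖Matrix.toEuclideanCLM (𝕜 := ℝ) M‖

private lemma list_norm_sum_le' {A : Type*} [SeminormedAddCommGroup A] {r : ℝ} :
    ∀ l : List A, (∀ x ∈ l, ‖x‖ ≤ r) → ‖l.sum‖ ≤ l.length * r := by
  intro l
  induction l with
  | nil => simp
  | cons a t ih =>
    intro h
    simp only [List.sum_cons, List.length_cons]
    have h1 : ‖a‖ ≤ r := h a (by simp)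
    have h2 := ih (fun x hx => h x (by simp [hx]))
    calc ‖a + t.sum‖ ≤ ‖a‖ + ‖t.sum‖ := norm_add_le _ _
      _ ≤ r + t.length * r := by linarith
      _ = ((t.length + 1 : ℕ) : ℝ) * r := by push_cast; ring

private lemma list_expand_bound' {A : Type*} [NormedRing A] {r : ℝ} (hr : 0 ≤ r) :
    ∀ l : List A, (∀ x ∈ l, ‖x‖ ≤ r) →
      ‖(l.map (fun a => 1 + a)).prod - (1 + l.sum)‖
        ≤ (1 + r) ^ l.length - 1 - l.length * r := by
  intro l
  induction l with
  | nil => simp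
  | cons a t ih =>
    intro h
    have ha : ‖a‖ ≤ r := h a (by simp)
    have ht : ∀ x ∈ t, ‖x‖ ≤ r := fun x hx => h x (by simp [hx])
    have hR := ih ht
    set P := (t.map (fun a => 1 + a)).prod with hP
    set S := t.sum with hS
    set n := t.length with hn
    have hSn : ‖S‖ ≤ n * r := list_norm_sum_le' t ht
    have hρ : (0:ℝ) ≤ (1 + r) ^ n - 1 - n * r := by
      have := one_add_mul_le_pow (a := r) (by linarith) n
      linarith [this]
    have key : ((a :: t).map (fun a => 1 + a)).prod - (1 + (a :: t).sum)
        = (P - (1 + S)) + a * S + a * (P - (1 + S)) := by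
      simp only [List.map_cons, List.prod_cons, List.sum_cons]
      noncomm_ring
    rw [key]
    have hb1 : ‖(P - (1 + S)) + a * S + a * (P - (1 + S))‖
        ≤ ‖P - (1+S)‖ + ‖a‖ * ‖S‖ + ‖a‖ * ‖P - (1+S)‖ := by
      calc ‖(P - (1 + S)) + a * S + a * (P - (1 + S))‖
          ≤ ‖(P - (1 + S)) + a * S‖ + ‖a * (P - (1+S))‖ := norm_add_le _ _
        _ ≤ ‖P - (1 + S)‖ + ‖a * S‖ + ‖a * (P - (1+S))‖ := by
            linarith [norm_add_le (P - (1+S)) (a * S)]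
        _ ≤ _ := by linarith [norm_mul_le a S, norm_mul_le a (P - (1+S))]
    have hlen : ((a :: t).length : ℝ) = (n : ℝ) + 1 := by simp [hn]
    have hgoal : (1 + r) ^ (a :: t).length - 1 - (a :: t).length * r
        = (1 + r) * ((1 + r) ^ n - 1 - n * r) + n * r ^ 2 := by
      simp only [List.length_cons, hlen]
      rw [pow_succ]
      push_cast
      ring
    rw [hgoal]
    have h1 : ‖a‖ * ‖S‖ ≤ r * (n * r) :=
      mul_le_mul ha hSn (norm_nonneg _) hr
    have h2 : ‖a‖ * ‖P - (1+S)‖ ≤ r * ((1 + r) ^ n - 1 - n * r) :=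
      mul_le_mul ha hR (norm_nonneg _) hr
    nlinarith [hb1]

private lemma icc_choose_sum' (n : ℕ) (r : ℝ) :
    ∑ k ∈ Finset.Icc 2 n, (n.choose k : ℝ) * r ^ k = (1 + r) ^ n - 1 - n * r := by
  have hrange : ∑ k ∈ Finset.range (n + 1), (n.choose k : ℝ) * r ^ k = (1 + r) ^ n := by
    rw [show (1 + r) ^ n = (r + 1) ^ n by ring, add_pow]
    exact Finset.sum_congr rfl (fun k _ => by ring)
  rcases Nat.eq_zero_or_pos n with h0 | hpos
  · subst h0; simp
  · have h2 : 2 ≤ n + 1 := by omega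
    rw [← Finset.Ico_add_one_right_eq_Icc, Finset.sum_Ico_eq_sub _ h2, hrange]
    have : ∑ k ∈ Finset.range 2, (n.choose k : ℝ) * r ^ k = 1 + n * r := by
      simp [Finset.sum_range_succ]
    rw [this]; ring

private lemma batchProj_sum' {N E : ℕ} (B : Fin E → Finset (Fin N))
    (hdisj : ∀ i j, i ≠ j → Disjoint (B i) (B j))
    (hcover : ∀ x : Fin N, ∃ i, x ∈ B i) :
    ∑ z, batchProj (B z) = (1 : Matrix (Fin N) (Fin N) ℝ) := by
  ext i j
  simp only [Matrix.sum_apply, batchProj, Matrix.diagonal_apply, Matrix.one_apply]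
  by_cases hij : i = j
  · subst hij
    simp only [if_pos rfl]
    obtain ⟨z0, hz0⟩ := hcover i
    rw [Finset.sum_eq_single z0]
    · simp [hz0]
    · intro z _ hz
      have : i ∉ B z := fun hmem => by
        simpa using (hdisj z z0 hz).le_bot (Finset.mem_inter.mpr ⟨hmem, hz0⟩ : i ∈ B z ∩ B z0)
      simp [this]
    · intro h; exact absurd (Finset.mem_univ z0) h
  · simp [hij]

private lemma batchProj_norm_le' {N : ℕ} (B' : Finset (Fin N)) :
    ‖Matrix.toEuclideanCLM (𝕜 := ℝ) (batchProj B')‖ ≤ 1 := by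
  refine ContinuousLinearMap.opNorm_le_bound _ zero_le_one (fun x => ?_)
  rw [one_mul]
  have hcoord : ∀ i, (Matrix.toEuclideanCLM (𝕜 := ℝ) (batchProj B') x) i
      = (if i ∈ B' then (1:ℝ) else 0) * x i := by
    intro i
    have := Matrix.ofLp_toEuclideanCLM (𝕜 := ℝ) (batchProj B') x
    have h2 : (Matrix.toEuclideanCLM (𝕜 := ℝ) (batchProj B') x) i
        = Matrix.toLin' (batchProj B') (WithLp.equiv _ _ x) i := congrFun this i
    rw [h2]
    simp [Matrix.toLin'_apply, batchProj, Matrix.mulVec_diagonal]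
  rw [EuclideanSpace.norm_eq, EuclideanSpace.norm_eq]
  apply Real.sqrt_le_sqrt
  apply Finset.sum_le_sum
  intro i _
  rw [hcoord i]
  by_cases h : i ∈ B' <;> simp [h] <;> positivity

/-- **One-epoch product bound for mini-batch SGD.** For disjoint batches `B₁, …, B_E`
covering `{1, …, N}`, the ordered product over one epoch satisfies
`‖Π_{z=E}^{1}(I − (η/b) G P_{B_z})‖_op ≤ ‖I − (η/b) G‖_op + Σ_{z=2}^{E} C(E,z) ((η/b)‖G‖_op)^z`. -/
theorem epoch_product_bound {N E : ℕ} (G : Matrix (Fin N) (Fin N) ℝ)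
    (B : Fin E → Finset (Fin N))
    (hdisj : ∀ i j, i ≠ j → Disjoint (B i) (B j))
    (hcover : ∀ x : Fin N, ∃ i, x ∈ B i)
    (η b : ℝ) (hη : 0 < η) (hb : 0 < b) :
    l2OpNorm
        ((List.ofFn fun z : Fin E =>
          (1 : Matrix (Fin N) (Fin N) ℝ) - (η / b) • (G * batchProj (B z))).reverse.prod)
      ≤ l2OpNorm (1 - (η / b) • G)
        + ∑ z ∈ Finset.Icc 2 E, (E.choose z : ℝ) * ((η / b) * l2OpNorm G) ^ z := by
  set f := Matrix.toEuclideanCLM (𝕜 := ℝ) (n := Fin N) with hf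
  set c := η / b with hc
  have hc0 : 0 ≤ c := le_of_lt (div_pos hη hb)
  set a : Fin E → (EuclideanSpace ℝ (Fin N) →L[ℝ] EuclideanSpace ℝ (Fin N)) :=
    fun z => -(c • (f (G * batchProj (B z)))) with ha
  set L := (List.ofFn a).reverse with hL
  set r := c * ‖f G‖ with hrdef
  have hr0 : 0 ≤ r := mul_nonneg hc0 (norm_nonneg _)
  -- norms of entries
  have hmem : ∀ x ∈ L, ‖x‖ ≤ r := by
    intro x hx
    rw [hL, List.mem_reverse, List.mem_ofFn] at hx
    obtain ⟨z, rfl⟩ := hx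
    rw [ha]
    simp only [norm_neg]
    rw [_root_.map_mul]
    calc ‖c • (f G * f (batchProj (B z)))‖
        = c * ‖f G * f (batchProj (B z))‖ := by
          rw [norm_smul c (f G * f (batchProj (B z))), Real.norm_eq_abs, abs_of_nonneg hc0]
      _
        ≤ c * (‖f G‖ * ‖f (batchProj (B z))‖) := by
          exact mul_le_mul_of_nonneg_left (norm_mul_le _ _) hc0
      _ ≤ c * (‖f G‖ * 1) := by
          have := batchProj_norm_le' (B z)
          exact mul_le_mul_of_nonneg_left
            (mul_le_mul_of_nonneg_left this (norm_nonneg _)) hc0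
      _ = r := by rw [hrdef]; ring
  -- identify the image of the product
  have hprod : f ((List.ofFn fun z : Fin E =>
        (1 : Matrix (Fin N) (Fin N) ℝ) - c • (G * batchProj (B z))).reverse.prod)
      = (L.map (fun x => 1 + x)).prod := by
    rw [map_list_prod]
    congr 1
    rw [hL, List.map_reverse, List.map_reverse, List.map_ofFn, List.map_ofFn]
    apply congrArg
    apply congrArg
    funext z
    show f (1 - c • (G * batchProj (B z))) = 1 + a z
    rw [map_sub, _root_.map_one, _root_.map_smul, ha]
    simp [sub_eq_add_neg]
  -- the sum of the list
  have hsum : (1 : EuclideanSpace ℝ (Fin N) →L[ℝ] EuclideanSpace ℝ (Fin N)) + L.sum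
      = f (1 - c • G) := by
    rw [hL, List.sum_reverse, List.sum_ofFn]
    have : ∑ z, a z = -(c • f G) := by
      rw [ha]
      simp only [Finset.sum_neg_distrib, ← Finset.smul_sum, ← map_sum]
      rw [← Finset.mul_sum, batchProj_sum' B hdisj hcover, mul_one]
    rw [this, map_sub, _root_.map_one, _root_.map_smul]
    abel
  have hlen : L.length = E := by simp [hL]
  have hbound := list_expand_bound' hr0 L hmem
  rw [hsum, hlen] at hbound
  have htri : ‖(L.map (fun x => 1 + x)).prod‖
      ≤ ‖f (1 - c • G)‖ + ((1 + r) ^ E - 1 - E * r) := by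
    calc ‖(L.map (fun x => 1 + x)).prod‖
        = ‖f (1 - c • G) + ((L.map (fun x => 1 + x)).prod - f (1 - c • G))‖ := by
          congr 1; abel
      _ ≤ ‖f (1 - c • G)‖ + ‖(L.map (fun x => 1 + x)).prod - f (1 - c • G)‖ :=
          norm_add_le _ _
      _ ≤ _ := by linarith [hbound]
  rw [l2OpNorm, l2OpNorm, ← hf, hprod]
  calc ‖(L.map (fun x => 1 + x)).prod‖
      ≤ ‖f (1 - c • G)‖ + ((1 + r) ^ E - 1 - E * r) := htri
    _ = ‖f (1 - c • G)‖ + ∑ k ∈ Finset.Icc 2 E, (E.choose k : ℝ) * r ^ k := by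
        rw [icc_choose_sum' E r]
    _ = _ := by rw [l2OpNorm, ← hf, hrdef]
end

section
/- Let G ∈ ℝ^{N×N} be symmetric positive definite with smallest eigenvalue λ₀ > 0, let B₁,…,B_E be pairwise disjoint subsets of {1,…,N} whose union is {1,…,N} with corresponding diagonal 0/1 projectors P_{B_z}, and let b > 0. Then there exists η₀ > 0 such that for all 0 < η < η₀, the one-epoch product satisfies ‖ Π_{z=E}^{1} ( I − (η/b) G P_{B_z} ) ‖_op ≤ 1 − (η/(2b)) λ₀ < 1. -/
/-!
To first order in `t = η / b` the epoch product is `1 - t ∑_z G P_{B_z} + O(t²) = 1 - t G + O(t²)`,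
because the batch projectors sum to the identity. For small `t > 0` the spectrum of the symmetric
matrix `1 - t G` lies in `[0, 1 - t λ₀]`, so its operator norm is at most `1 - t λ₀`, and the
`O(t²)` remainder costs at most half of the gain `t λ₀`.
-/

open Matrix

open Asymptotics Filter Topology
open scoped Matrix.Norms.L2Operator

theorem IsSelfAdjoint.norm_le_of_forall_mem_spectrum {E : Type*} [NormedAddCommGroup E]
    [InnerProductSpace ℝ E] [CompleteSpace E] {T : E →L[ℝ] E} (hT : IsSelfAdjoint T) {c : ℝ}
    (hc : 0 ≤ c) (h : ∀ μ ∈ spectrum ℝ T, |μ| ≤ c) : ‖T‖ ≤ c := by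
  have hrad : spectralRadius ℝ T ≤ c.toNNReal :=
    iSup₂_le fun μ hμ => ENNReal.coe_le_coe.2 <| (Real.le_toNNReal_iff_coe_le hc).2 (h μ hμ)
  rw [ContinuousLinearMap.spectralRadius_eq_nnnorm T hT, ENNReal.coe_le_coe] at hrad
  exact (Real.le_toNNReal_iff_coe_le hc).1 hrad

theorem spectrum.exists_eq_one_sub_mul_of_mem {A : Type*} [Ring A] [Algebra ℝ A] {T : A}
    {s μ : ℝ} (hs : s ≠ 0) (hμ : μ ∈ spectrum ℝ (1 - s • T)) :
    ∃ ν ∈ spectrum ℝ T, μ = 1 - s * ν := by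
  rw [← map_one (algebraMap ℝ A), ← Units.val_mk0 hs, ← Units.smul_def,
    ← spectrum.singleton_sub_eq, spectrum.unit_smul_eq_smul] at hμ
  obtain ⟨_, rfl, _, ⟨ν, hν, rfl⟩, rfl⟩ := hμ
  exact ⟨ν, hν, rfl⟩

theorem IsSelfAdjoint.norm_one_sub_smul_le {E : Type*} [NormedAddCommGroup E]
    [InnerProductSpace ℝ E] [CompleteSpace E] {T : E →L[ℝ] E} (hT : IsSelfAdjoint T) {m s : ℝ}
    (hm : ∀ μ ∈ spectrum ℝ T, m ≤ μ) (hs : 0 < s) (hsT : s * ‖T‖ ≤ 1) (hsm : s * m ≤ 1) :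
    ‖1 - s • T‖ ≤ 1 - s * m := by
  rcases subsingleton_or_nontrivial E with hE | hE
  · rw [Subsingleton.elim (1 - s • T) 0, norm_zero]
    linarith
  have hself : IsSelfAdjoint (1 - s • T) :=
    (IsSelfAdjoint.one _).sub ((IsSelfAdjoint.all s).smul hT)
  refine hself.norm_le_of_forall_mem_spectrum (by linarith) fun μ hμ => ?_
  obtain ⟨ν, hν, rfl⟩ := spectrum.exists_eq_one_sub_mul_of_mem hs.ne' hμ
  have hν_le : ν ≤ ‖T‖ := (le_abs_self ν).trans (spectrum.norm_le_norm_of_mem hν)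
  rw [abs_le]
  constructor <;> nlinarith [hm ν hν]

theorem Matrix.exists_mulVec_eq_smul_of_mem_spectrum {K n : Type*} [Field K] [Fintype n]
    [DecidableEq n] {A : Matrix n n K} {μ : K} (h : μ ∈ spectrum K A) :
    ∃ v ≠ 0, A *ᵥ v = μ • v := by
  rw [← Matrix.spectrum_toLin', ← Module.End.hasEigenvalue_iff_mem_spectrum] at h
  obtain ⟨v, hv⟩ := h.exists_hasEigenvector
  exact ⟨v, hv.2, hv.apply_eq_smul⟩

theorem Matrix.IsHermitian.eventually_norm_one_sub_smul_le {n : Type*} [Fintype n]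
    [DecidableEq n] {G : Matrix n n ℝ} (hG : G.IsHermitian) {m : ℝ}
    (hm : ∀ μ ∈ spectrum ℝ G, m ≤ μ) :
    ∀ᶠ t in 𝓝[>] 0, ‖1 - t • G‖ ≤ 1 - t * m := by
  set T := toEuclideanCLM (𝕜 := ℝ) G
  have hT : IsSelfAdjoint T := hG.isSelfAdjoint.map _
  have hsmall (c : ℝ) : ∀ᶠ t in 𝓝[>] (0 : ℝ), t * c ≤ 1 :=
    nhdsWithin_le_nhds <|
      ((continuous_mul_const c).tendsto' 0 0 (zero_mul c)).eventually (ge_mem_nhds one_pos)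
  filter_upwards [hsmall ‖T‖, hsmall m, self_mem_nhdsWithin] with t htT htm (ht : 0 < t)
  rw [cstar_norm_def, map_sub, map_one, map_smul]
  exact hT.norm_one_sub_smul_le (fun μ hμ => hm μ (by rwa [AlgEquiv.spectrum_eq] at hμ)) ht htT htm

theorem isBigO_list_prod_one_sub_smul {R : Type*} [NormedRing R] [NormedAlgebra ℝ R]
    (L : List R) :
    (fun t : ℝ => (L.map fun A => 1 - t • A).prod - (1 - t • L.sum)) =O[𝓝 0] fun t => t ^ 2 := by
  induction L with
  | nil => simpa using isBigO_zero _ _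
  | cons A L ih =>
    have hfactor : (fun t : ℝ => 1 - t • A) =O[𝓝 0] fun _ => (1 : ℝ) :=
      ((continuous_const.sub (continuous_id.smul continuous_const)).tendsto 0).isBigO_one ℝ
    have hquad : (fun t : ℝ => t ^ 2 • (A * L.sum)) =O[𝓝 0] fun t => t ^ 2 :=
      .of_bound ‖A * L.sum‖ (.of_forall fun t => by rw [norm_smul, mul_comm])
    have hstep : ∀ t : ℝ, ((A :: L).map fun A => 1 - t • A).prod - (1 - t • (A :: L).sum) =
        (1 - t • A) * ((L.map fun A => 1 - t • A).prod - (1 - t • L.sum)) +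
          t ^ 2 • (A * L.sum) := by
      intro t
      simp only [List.map_cons, List.prod_cons, List.sum_cons, mul_sub, sub_mul, smul_mul_assoc,
        mul_smul_comm, mul_one, one_mul, smul_add]
      module
    simp_rw [hstep]
    refine .add ?_ hquad
    simpa using hfactor.mul ih

theorem eventually_norm_list_prod_one_sub_smul_le {R : Type*} [NormedRing R] [NormedAlgebra ℝ R]
    (L : List R) {m : ℝ} (hm : 0 < m) (h : ∀ᶠ t in 𝓝[>] 0, ‖1 - t • L.sum‖ ≤ 1 - t * m) :
    ∀ᶠ t in 𝓝[>] 0, ‖(L.map fun A => 1 - t • A).prod‖ ≤ 1 - t * (m / 2) := by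
  obtain ⟨C, hC⟩ := (isBigO_list_prod_one_sub_smul L).bound
  have hsmall : ∀ᶠ t in 𝓝[>] (0 : ℝ), C * t ≤ m / 2 :=
    nhdsWithin_le_nhds <| (continuous_const_mul C).tendsto' 0 0 (mul_zero C) |>.eventually
      (ge_mem_nhds (half_pos hm))
  filter_upwards [h, nhdsWithin_le_nhds hC, hsmall, self_mem_nhdsWithin] with t ht hCt hsmall
    (htpos : 0 < t)
  calc ‖(L.map fun A => 1 - t • A).prod‖
      ≤ ‖1 - t • L.sum‖ + ‖(L.map fun A => 1 - t • A).prod - (1 - t • L.sum)‖ :=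
        norm_le_norm_add_norm_sub' _ _
    _ ≤ 1 - t * m + C * t ^ 2 := by
        rw [Real.norm_eq_abs, abs_pow, sq_abs] at hCt
        linarith
    _ ≤ 1 - t * (m / 2) := by nlinarith

theorem sum_batchProj_eq_one {N E : ℕ} (B : Fin E → Finset (Fin N))
    (hdisj : ∀ i j, i ≠ j → Disjoint (B i) (B j)) (hcover : ∀ x : Fin N, ∃ i, x ∈ B i) :
    ∑ z, batchProj (B z) = 1 := by
  have hcount : ∀ x, ∑ z, (if x ∈ B z then (1 : ℝ) else 0) = 1 := by
    intro x
    obtain ⟨z₀, hz₀⟩ := hcover x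
    rw [Finset.sum_eq_single z₀ ?_ (by simp), if_pos hz₀]
    intro z _ hz
    exact if_neg fun hx => Finset.disjoint_left.mp (hdisj z z₀ hz) hx hz₀
  calc ∑ z, batchProj (B z) = diagonal (∑ z, fun x => if x ∈ B z then (1 : ℝ) else 0) :=
        (map_sum (diagonalAddMonoidHom (Fin N) ℝ) _ _).symm
    _ = 1 := by
        rw [← diagonal_one]
        congr 1
        ext x
        rw [Finset.sum_apply, hcount x]

theorem epoch_contraction_general {N E : ℕ} (G : Matrix (Fin N) (Fin N) ℝ)
    (hG : G.PosDef) (lam0 : ℝ) (hlam_pos : 0 < lam0)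
    (hlam_min : ∀ (μ : ℝ) (v : Fin N → ℝ), v ≠ 0 → G.mulVec v = μ • v → lam0 ≤ μ)
    (B : Fin E → Finset (Fin N))
    (hdisj : ∀ i j, i ≠ j → Disjoint (B i) (B j))
    (hcover : ∀ x : Fin N, ∃ i, x ∈ B i)
    (b : ℝ) (hb : 0 < b) :
    ∃ η₀ > 0, ∀ η : ℝ, 0 < η → η < η₀ →
      l2OpNorm
          ((List.ofFn fun z : Fin E =>
            (1 : Matrix (Fin N) (Fin N) ℝ) - (η / b) • (G * batchProj (B z))).reverse.prod)
        ≤ 1 - η / (2 * b) * lam0 ∧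
      1 - η / (2 * b) * lam0 < 1 := by
  have hspec : ∀ μ ∈ spectrum ℝ G, lam0 ≤ μ := fun μ hμ =>
    let ⟨v, hv, hGv⟩ := exists_mulVec_eq_smul_of_mem_spectrum hμ
    hlam_min μ v hv hGv
  set L := (List.ofFn fun z : Fin E => G * batchProj (B z)).reverse
  have hsum : L.sum = G := by
    rw [List.sum_reverse, List.sum_ofFn, ← Finset.mul_sum, sum_batchProj_eq_one B hdisj hcover,
      mul_one]
  have hepoch := eventually_norm_list_prod_one_sub_smul_le L hlam_pos
    (hsum ▸ hG.1.eventually_norm_one_sub_smul_le hspec)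
  obtain ⟨δ, hδ, hδ_spec⟩ := (nhdsGT_basis (0 : ℝ)).eventually_iff.1 hepoch
  refine ⟨b * δ, by positivity, fun η hη hηδ => ⟨?_, ?_⟩⟩
  · calc l2OpNorm _ = ‖(L.map fun A => 1 - (η / b) • A).prod‖ := by
          simp only [L, List.map_reverse, List.map_ofFn]
          rfl
      _ ≤ 1 - η / b * (lam0 / 2) := hδ_spec ⟨div_pos hη hb, (div_lt_iff₀' hb).2 hηδ⟩
      _ = 1 - η / (2 * b) * lam0 := by ring
  · have : 0 < η / (2 * b) * lam0 := by positivity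
    linarith

/-- **One-epoch contraction for mini-batch SGD.** If `G` is symmetric positive definite with
smallest eigenvalue `λ₀ > 0` and `B₁, …, B_E` are disjoint batches covering `{1, …, N}`,
then for all sufficiently small `η > 0` the one-epoch ordered product satisfies
`‖Π_{z=E}^{1}(I − (η/b) G P_{B_z})‖_op ≤ 1 − (η/(2b)) λ₀ < 1`. -/
theorem epoch_contraction {N E : ℕ} (G : Matrix (Fin N) (Fin N) ℝ)
    (hG : G.PosDef) (lam0 : ℝ) (hlam_pos : 0 < lam0)
    (hlam_eig : ∃ v : Fin N → ℝ, v ≠ 0 ∧ G.mulVec v = lam0 • v)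
    (hlam_min : ∀ (μ : ℝ) (v : Fin N → ℝ), v ≠ 0 → G.mulVec v = μ • v → lam0 ≤ μ)
    (B : Fin E → Finset (Fin N))
    (hdisj : ∀ i j, i ≠ j → Disjoint (B i) (B j))
    (hcover : ∀ x : Fin N, ∃ i, x ∈ B i)
    (b : ℝ) (hb : 0 < b) :
    ∃ η₀ > 0, ∀ η : ℝ, 0 < η → η < η₀ →
      l2OpNorm
          ((List.ofFn fun z : Fin E =>
            (1 : Matrix (Fin N) (Fin N) ℝ) - (η / b) • (G * batchProj (B z))).reverse.prod)
        ≤ 1 - η / (2 * b) * lam0 ∧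
      1 - η / (2 * b) * lam0 < 1 :=
  epoch_contraction_general G hG lam0 hlam_pos hlam_min B hdisj hcover b hb
end

section
/- Let Φ ∈ ℝ^{N×P} with ΦΦᵀ invertible, Ŷ ∈ ℝ^N, θ₀ ∈ ℝ^P, and let B₁,…,B_E be a partition of {1,…,N} into batches of equal size b, cycled through repeatedly (epoch-wise mini-batch SGD without reshuffling): at step t with current batch B, θ_{t+1} = θ_t − (η/b) (P_B Φ)ᵀ ( P_B Φ θ_t − P_B Ŷ ). Then there exists η₀ > 0 such that for all 0 < η < η₀ the iterates θ_t converge as t → ∞ to θ∞ = θ₀ + Φᵀ(ΦΦᵀ)⁻¹ (Ŷ − Φθ₀), the same limit as full-batch gradient descent started from θ₀; in particular the SGD limit is independent of the batch size and batch order. -/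
open Matrix Filter

/-- Auxiliary: composition of the first `i` step maps. -/
def epochIter {P : ℕ} (f : ℕ → ((Fin P → ℝ) →ₗ[ℝ] (Fin P → ℝ))) :
    ℕ → ((Fin P → ℝ) →ₗ[ℝ] (Fin P → ℝ))
  | 0 => LinearMap.id
  | (i + 1) => (f i).comp (epochIter f i)

lemma dot_self_nonneg {n : ℕ} (v : Fin n → ℝ) : 0 ≤ v ⬝ᵥ v :=
  Finset.sum_nonneg fun i _ => mul_self_nonneg (v i)

/-- Abstract convergence lemma: a norm-nonincreasing sequence whose epoch map is a strict
contraction on an invariant subspace containing the iterates tends to zero. -/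
lemma sgd_key {X : Type*} [NormedAddCommGroup X] [NormedSpace ℝ X] [FiniteDimensional ℝ X]
    {E : ℕ} (hE : 0 < E) (V : Submodule ℝ X) (M : X →ₗ[ℝ] X) (e : ℕ → X)
    (h1 : ∀ t, ‖e (t + 1)‖ ≤ ‖e t‖)
    (h2 : ∀ k, e ((k + 1) * E) = M (e (k * E)))
    (h0 : e 0 ∈ V) (hV : ∀ x ∈ V, M x ∈ V)
    (h4 : ∀ x ∈ V, x ≠ 0 → ‖M x‖ < ‖x‖) :
    Tendsto e atTop (nhds 0) := by
  have hmono : Antitone fun t => ‖e t‖ :=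
    antitone_nat_of_succ_le fun t => h1 t
  rw [tendsto_zero_iff_norm_tendsto_zero]
  by_cases h : e 0 = 0
  · refine squeeze_zero (fun t => norm_nonneg _) (fun t => ?_) tendsto_const_nhds
    calc ‖e t‖ ≤ ‖e 0‖ := hmono (Nat.zero_le t)
    _ = (fun _ : ℕ => (0:ℝ)) t := by simp [h]
  · have hmem : ∀ k, e (k * E) ∈ V := by
      intro k
      induction k with
      | zero => simpa using h0
      | succ n ih => rw [h2]; exact hV _ ih
    have hScomp : IsCompact (Metric.sphere (0:X) 1 ∩ (V : Set X)) :=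
      (isCompact_sphere 0 1).inter_right V.closed_of_finiteDimensional
    have hSne : (Metric.sphere (0:X) 1 ∩ (V : Set X)).Nonempty := by
      refine ⟨‖e 0‖⁻¹ • e 0, ?_, V.smul_mem _ h0⟩
      rw [mem_sphere_zero_iff_norm, norm_smul, norm_inv, norm_norm,
        inv_mul_cancel₀ (norm_ne_zero_iff.2 h)]
    have cont : Continuous fun x : X => ‖M x‖ := M.continuous_of_finiteDimensional.norm
    obtain ⟨x₀, hx₀S, hmax⟩ := hScomp.exists_isMaxOn hSne cont.continuousOn
    set r := ‖M x₀‖ with hr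
    have hx₀n : ‖x₀‖ = 1 := mem_sphere_zero_iff_norm.1 hx₀S.1
    have hr0 : 0 ≤ r := norm_nonneg _
    have hr1 : r < 1 := by
      have := h4 x₀ hx₀S.2 (by intro h0'; rw [h0'] at hx₀n; simp at hx₀n)
      rwa [hx₀n] at this
    have hbound : ∀ x ∈ V, ‖M x‖ ≤ r * ‖x‖ := by
      intro x hx
      rcases eq_or_ne x 0 with rfl | hx0
      · simp
      · have hn : ‖x‖ ≠ 0 := norm_ne_zero_iff.2 hx0
        have hu : (‖x‖⁻¹ • x) ∈ Metric.sphere (0:X) 1 ∩ (V : Set X) := by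
          refine ⟨?_, V.smul_mem _ hx⟩
          rw [mem_sphere_zero_iff_norm, norm_smul, norm_inv, norm_norm, inv_mul_cancel₀ hn]
        have hle := hmax hu
        have hxeq : x = ‖x‖ • (‖x‖⁻¹ • x) := (smul_inv_smul₀ hn x).symm
        calc ‖M x‖ = ‖x‖ * ‖M (‖x‖⁻¹ • x)‖ := by
              conv_lhs => rw [hxeq]
              rw [M.map_smul, norm_smul, norm_norm]
        _ ≤ ‖x‖ * r := mul_le_mul_of_nonneg_left hle (norm_nonneg x)
        _ = r * ‖x‖ := mul_comm _ _
    have hk : ∀ k, ‖e (k * E)‖ ≤ r ^ k * ‖e 0‖ := by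
      intro k
      induction k with
      | zero => simp
      | succ n ih =>
        rw [h2]
        calc ‖M (e (n * E))‖ ≤ r * ‖e (n * E)‖ := hbound _ (hmem n)
        _ ≤ r * (r ^ n * ‖e 0‖) := mul_le_mul_of_nonneg_left ih hr0
        _ = r ^ (n + 1) * ‖e 0‖ := by ring
    have ht : ∀ t, ‖e t‖ ≤ r ^ (t / E) * ‖e 0‖ := fun t =>
      le_trans (hmono (Nat.div_mul_le_self t E)) (hk _)
    have hdiv : Tendsto (fun t : ℕ => t / E) atTop atTop :=
      tendsto_atTop_atTop.2 fun c => ⟨c * E, fun t ht' => (Nat.le_div_iff_mul_le hE).2 ht'⟩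
    have htend : Tendsto (fun t : ℕ => r ^ (t / E) * ‖e 0‖) atTop (nhds 0) := by
      have := ((tendsto_pow_atTop_nhds_zero_of_lt_one hr0 hr1).comp hdiv).mul_const ‖e 0‖
      simpa using this
    exact squeeze_zero (fun t => norm_nonneg _) ht htend

set_option maxHeartbeats 2000000 in
/-- **Mini-batch SGD converges to the gradient-descent minimizer (non-adaptive case).**
For an overparameterized linear model with `ΦΦᵀ` invertible and epoch-wise mini-batch SGD
over a fixed partition `B₁, …, B_E` of `{1, …, N}` into batches of equal size `b` (batch
`B_{t mod E}` at step `t`), there is `η₀ > 0` such that for all `0 < η < η₀` the iterates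
converge to `θ∞ = θ₀ + Φᵀ(ΦΦᵀ)⁻¹(Yhat − Φθ₀)`, the full-batch GD limit; in particular the
limit is independent of the batch size and batch order. -/
theorem sgd_gd_same_minimizer {N P E : ℕ} (hE : 0 < E)
    (Φ : Matrix (Fin N) (Fin P) ℝ) (hinv : IsUnit (Φ * Φᵀ).det)
    (Yhat : Fin N → ℝ) (θ₀ : Fin P → ℝ)
    (B : Fin E → Finset (Fin N))
    (hdisj : ∀ i j, i ≠ j → Disjoint (B i) (B j))
    (hcover : ∀ x : Fin N, ∃ i, x ∈ B i)
    (b : ℕ) (hb : 0 < b) (hsize : ∀ i, (B i).card = b) :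
    ∃ η₀ > 0, ∀ η : ℝ, 0 < η → η < η₀ →
      ∀ θ : ℕ → Fin P → ℝ, θ 0 = θ₀ →
        (∀ t, θ (t + 1) =
          θ t - (η / b) •
            ((batchProj (B ⟨t % E, Nat.mod_lt t hE⟩) * Φ)ᵀ).mulVec
              ((batchProj (B ⟨t % E, Nat.mod_lt t hE⟩) * Φ).mulVec (θ t)
                - (batchProj (B ⟨t % E, Nat.mod_lt t hE⟩)).mulVec Yhat)) →
        Tendsto θ atTop
          (nhds (θ₀ + (Φᵀ * (Φ * Φᵀ)⁻¹).mulVec (Yhat - Φ.mulVec θ₀))) := by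
  classical
  set θI : Fin P → ℝ := θ₀ + (Φᵀ * (Φ * Φᵀ)⁻¹).mulVec (Yhat - Φ.mulVec θ₀) with hθI
  have hΦθI : Φ *ᵥ θI = Yhat := by
    rw [hθI, Matrix.mulVec_add, Matrix.mulVec_mulVec, ← Matrix.mul_assoc,
      Matrix.mul_nonsing_inv _ hinv, Matrix.one_mulVec]
    abel
  set Fro : ℝ := ∑ n : Fin N, ∑ p : Fin P, (Φ n p) ^ 2 with hFro
  have hFro0 : 0 ≤ Fro := by
    rw [hFro]; positivity
  refine ⟨(b : ℝ) / (Fro + 1), by positivity, ?_⟩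
  intro η hη0 hηlt θ hθ0 hrec
  set c : ℝ := η / (b : ℝ) with hc
  have hb0 : (0 : ℝ) < b := Nat.cast_pos.2 hb
  have hc0 : 0 < c := div_pos hη0 hb0
  have hcF : c * Fro ≤ 1 := by
    have h1 : η * (Fro + 1) < (b : ℝ) := by
      have := (lt_div_iff₀ (by positivity : (0:ℝ) < Fro + 1)).1 hηlt
      linarith
    have h2 : c * (Fro + 1) < 1 := by
      rw [hc, div_mul_eq_mul_div, div_lt_one hb0]; exact h1
    nlinarith [hc0.le]
  set A : Fin E → Matrix (Fin N) (Fin P) ℝ := fun j => batchProj (B j) * Φ with hA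
  set stepL : Fin E → ((Fin P → ℝ) →ₗ[ℝ] (Fin P → ℝ)) := fun j =>
    LinearMap.id - c • ((A j)ᵀ.mulVecLin ∘ₗ (A j).mulVecLin) with hstepLdef
  have hstepL_apply : ∀ j x, stepL j x = x - c • ((A j)ᵀ *ᵥ ((A j) *ᵥ x)) := by
    intro j x
    simp only [hstepLdef, LinearMap.sub_apply, LinearMap.smul_apply, LinearMap.comp_apply,
      LinearMap.id_apply, Matrix.mulVecLin_apply]
  set e : ℕ → (Fin P → ℝ) := fun t => θ t - θI with he
  have hAθI : ∀ j : Fin E, (batchProj (B j) * Φ) *ᵥ θI = (batchProj (B j)) *ᵥ Yhat := by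
    intro j
    rw [← Matrix.mulVec_mulVec, hΦθI]
  have hrec' : ∀ t, e (t + 1) = stepL ⟨t % E, Nat.mod_lt t hE⟩ (e t) := by
    intro t
    rw [hstepL_apply]
    simp only [he, hA]
    rw [hrec t]
    rw [Matrix.mulVec_sub (batchProj (B ⟨t % E, Nat.mod_lt t hE⟩) * Φ) (θ t) θI, hAθI]
    exact sub_right_comm _ _ _
  -- Frobenius bound
  have hfro : ∀ (j : Fin E) (y : Fin N → ℝ),
      ((A j)ᵀ *ᵥ y) ⬝ᵥ ((A j)ᵀ *ᵥ y) ≤ Fro * (y ⬝ᵥ y) := by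
    intro j y
    have hentry : ∀ p : Fin P, (((A j)ᵀ *ᵥ y) p) ^ 2 ≤ (∑ n, (Φ n p) ^ 2) * (y ⬝ᵥ y) := by
      intro p
      have h1 : ((A j)ᵀ *ᵥ y) p = ∑ n, (A j) n p * y n := by
        simp [Matrix.mulVec, dotProduct, Matrix.transpose_apply]
      rw [h1]
      calc (∑ n, (A j) n p * y n) ^ 2
          ≤ (∑ n, ((A j) n p) ^ 2) * (∑ n, (y n) ^ 2) :=
            Finset.sum_mul_sq_le_sq_mul_sq _ _ _
      _ ≤ (∑ n, (Φ n p) ^ 2) * (∑ n, (y n) ^ 2) := by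
            refine mul_le_mul_of_nonneg_right (Finset.sum_le_sum fun n _ => ?_)
              (by positivity)
            have hent : (A j) n p = (if n ∈ B j then 1 else 0) * Φ n p := by
              simp [hA, batchProj, Matrix.diagonal_mul]
            rw [hent]
            split_ifs <;> simp [sq_nonneg]
      _ = (∑ n, (Φ n p) ^ 2) * (y ⬝ᵥ y) := by
            congr 1
            simp [dotProduct, sq]
    calc ((A j)ᵀ *ᵥ y) ⬝ᵥ ((A j)ᵀ *ᵥ y) = ∑ p, (((A j)ᵀ *ᵥ y) p) ^ 2 := by
          simp [dotProduct, sq]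
    _ ≤ ∑ p, (∑ n, (Φ n p) ^ 2) * (y ⬝ᵥ y) := Finset.sum_le_sum fun p _ => hentry p
    _ = (∑ p, ∑ n, (Φ n p) ^ 2) * (y ⬝ᵥ y) := by rw [Finset.sum_mul]
    _ = Fro * (y ⬝ᵥ y) := by rw [hFro, Finset.sum_comm]
  -- one-step decrease of the squared norm
  have hstepq : ∀ (j : Fin E) (x : Fin P → ℝ),
      (stepL j x) ⬝ᵥ (stepL j x) ≤ x ⬝ᵥ x - c * (((A j) *ᵥ x) ⬝ᵥ ((A j) *ᵥ x)) := by
    intro j x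
    rw [hstepL_apply]
    set y := (A j) *ᵥ x with hy
    set z := (A j)ᵀ *ᵥ y with hz'
    have hxz : x ⬝ᵥ z = y ⬝ᵥ y := by
      rw [hz', Matrix.dotProduct_mulVec, Matrix.vecMul_transpose, ← hy]
    have hexp : (x - c • z) ⬝ᵥ (x - c • z)
        = x ⬝ᵥ x - 2 * (c * (x ⬝ᵥ z)) + c ^ 2 * (z ⬝ᵥ z) := by
      simp only [sub_dotProduct, dotProduct_sub, smul_dotProduct,
        dotProduct_smul, smul_eq_mul, dotProduct_comm z x]
      ring
    have hzz : z ⬝ᵥ z ≤ Fro * (y ⬝ᵥ y) := hfro j y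
    have hyy : 0 ≤ y ⬝ᵥ y := dot_self_nonneg y
    rw [hexp, hxz]
    nlinarith [hc0.le, sq_nonneg c, mul_le_mul_of_nonneg_left hzz (sq_nonneg c),
      mul_le_mul_of_nonneg_right hcF (mul_nonneg hc0.le hyy)]
  -- the epoch iteration
  set f : ℕ → ((Fin P → ℝ) →ₗ[ℝ] (Fin P → ℝ)) :=
    fun i => stepL ⟨i % E, Nat.mod_lt i hE⟩ with hf
  have hiter_succ : ∀ (i : ℕ) (x : Fin P → ℝ),
      epochIter f (i + 1) x = stepL ⟨i % E, Nat.mod_lt i hE⟩ (epochIter f i x) := by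
    intro i x
    simp [epochIter, hf]
  have hepoch : ∀ k i, e (k * E + i) = epochIter f i (e (k * E)) := by
    intro k i
    induction i with
    | zero => simp [epochIter]
    | succ n ih =>
      have hstepi : k * E + (n + 1) = (k * E + n) + 1 := rfl
      have hfin : (⟨(k * E + n) % E, Nat.mod_lt _ hE⟩ : Fin E)
          = ⟨n % E, Nat.mod_lt n hE⟩ := by
        apply Fin.ext
        show (k * E + n) % E = n % E
        rw [mul_comm]
        exact Nat.mul_add_mod E k n
      rw [hstepi, hrec', ih, hiter_succ, hfin]
  have hepochE : ∀ k, e ((k + 1) * E) = epochIter f E (e (k * E)) := by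
    intro k
    have := hepoch k E
    rwa [show k * E + E = (k + 1) * E by ring] at this
  -- the invariant subspace
  set V : Submodule ℝ (Fin P → ℝ) := LinearMap.range (Φᵀ).mulVecLin with hV
  have hmemV : ∀ w : Fin N → ℝ, Φᵀ *ᵥ w ∈ V := by
    intro w
    rw [hV]
    exact ⟨w, by simp [Matrix.mulVecLin_apply, Matrix.mulVec_transpose]⟩
  have h0V : e 0 ∈ V := by
    have h00 : e 0 = Φᵀ *ᵥ (-(((Φ * Φᵀ)⁻¹) *ᵥ (Yhat - Φ *ᵥ θ₀))) := by
      simp only [he]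
      rw [hθ0, hθI, Matrix.mulVec_neg, Matrix.mulVec_mulVec]
      abel
    rw [h00]
    exact hmemV _
  have hstepV : ∀ (j : Fin E), ∀ x ∈ V, stepL j x ∈ V := by
    intro j x hx
    rw [hstepL_apply]
    refine V.sub_mem hx (V.smul_mem _ ?_)
    have h1 : (A j)ᵀ *ᵥ ((A j) *ᵥ x) = Φᵀ *ᵥ ((batchProj (B j))ᵀ *ᵥ ((A j) *ᵥ x)) := by
      simp only [hA, Matrix.transpose_mul, Matrix.mulVec_mulVec]
      rw [Matrix.mul_assoc]
    rw [h1]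
    exact hmemV _
  have hiterV : ∀ i, ∀ x ∈ V, epochIter f i x ∈ V := by
    intro i
    induction i with
    | zero => intro x hx; simpa [epochIter] using hx
    | succ n ih =>
      intro x hx
      rw [hiter_succ]
      exact hstepV _ _ (ih x hx)
  -- strict contraction on V
  have hstrict : ∀ v ∈ V, v ≠ 0 →
      (epochIter f E v) ⬝ᵥ (epochIter f E v) < v ⬝ᵥ v := by
    intro v hvV hv0
    by_contra hcon
    push_neg at hcon
    set xs : ℕ → (Fin P → ℝ) := fun i => epochIter f i v with hxs
    have hxs0 : xs 0 = v := by simp [hxs, epochIter]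
    have hxssucc : ∀ i, xs (i + 1) = stepL ⟨i % E, Nat.mod_lt i hE⟩ (xs i) := by
      intro i; simp only [hxs]; exact hiter_succ i v
    have hdec : ∀ i, (xs (i + 1)) ⬝ᵥ (xs (i + 1)) ≤ (xs i) ⬝ᵥ (xs i)
        - c * (((A ⟨i % E, Nat.mod_lt i hE⟩) *ᵥ xs i) ⬝ᵥ ((A ⟨i % E, Nat.mod_lt i hE⟩) *ᵥ xs i)) := by
      intro i
      rw [hxssucc]
      exact hstepq _ _
    have hanti : Antitone fun i => (xs i) ⬝ᵥ (xs i) := by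
      apply antitone_nat_of_succ_le
      intro i
      have h1 := hdec i
      have h2 : 0 ≤ ((A ⟨i % E, Nat.mod_lt i hE⟩) *ᵥ xs i) ⬝ᵥ ((A ⟨i % E, Nat.mod_lt i hE⟩) *ᵥ xs i) :=
        dot_self_nonneg _
      nlinarith [hc0.le]
    have hAzero : ∀ i, i < E →
        (A ⟨i % E, Nat.mod_lt i hE⟩) *ᵥ (xs i) = 0 ∧ xs (i + 1) = xs i := by
      intro i hiE
      have hup : (xs (i + 1)) ⬝ᵥ (xs (i + 1)) ≥ (xs i) ⬝ᵥ (xs i) := by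
        have hA1 : (xs E) ⬝ᵥ (xs E) ≤ (xs (i + 1)) ⬝ᵥ (xs (i + 1)) := hanti hiE
        have hA2 : (xs i) ⬝ᵥ (xs i) ≤ (xs 0) ⬝ᵥ (xs 0) := hanti (Nat.zero_le i)
        have hA3 : (xs 0) ⬝ᵥ (xs 0) ≤ (xs E) ⬝ᵥ (xs E) := by
          rw [hxs0]; exact hcon
        linarith
      have hq0 : ((A ⟨i % E, Nat.mod_lt i hE⟩) *ᵥ xs i) ⬝ᵥ ((A ⟨i % E, Nat.mod_lt i hE⟩) *ᵥ xs i) = 0 := by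
        have h1 := hdec i
        have h2 := dot_self_nonneg ((A ⟨i % E, Nat.mod_lt i hE⟩) *ᵥ xs i)
        nlinarith
      have hAv : (A ⟨i % E, Nat.mod_lt i hE⟩) *ᵥ (xs i) = 0 :=
        dotProduct_self_eq_zero.1 hq0
      refine ⟨hAv, ?_⟩
      rw [hxssucc, hstepL_apply, hAv]
      simp
    have hxsv : ∀ i, i ≤ E → xs i = v := by
      intro i
      induction i with
      | zero => intro _; exact hxs0
      | succ n ih =>
        intro hn
        have hnE : n < E := Nat.lt_of_succ_le hn
        rw [(hAzero n hnE).2]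
        exact ih (Nat.le_of_lt hnE)
    have hAj : ∀ j : Fin E, (A j) *ᵥ v = 0 := by
      intro j
      have h1 := (hAzero j.1 j.isLt).1
      rw [hxsv j.1 (Nat.le_of_lt j.isLt)] at h1
      have hfin : (⟨j.1 % E, Nat.mod_lt j.1 hE⟩ : Fin E) = j := by
        apply Fin.ext
        exact Nat.mod_eq_of_lt j.isLt
      rwa [hfin] at h1
    have hΦv : Φ *ᵥ v = 0 := by
      funext n
      obtain ⟨j, hjn⟩ := hcover n
      have h1 := congrFun (hAj j) n
      simp only [hA] at h1
      simpa [Matrix.mulVec, dotProduct, batchProj, Matrix.diagonal_mul, hjn] using h1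
    have hvv : v ⬝ᵥ v = 0 := by
      rw [hV] at hvV
      obtain ⟨u, hu⟩ := hvV
      have hveq : v = Φᵀ *ᵥ u := by
        rw [← hu]; simp [Matrix.mulVecLin_apply, Matrix.mulVec_transpose]
      calc v ⬝ᵥ v = v ⬝ᵥ (Φᵀ *ᵥ u) := by rw [← hveq]
      _ = (v ᵥ* Φᵀ) ⬝ᵥ u := Matrix.dotProduct_mulVec _ _ _
      _ = (Φ *ᵥ v) ⬝ᵥ u := by rw [Matrix.vecMul_transpose]
      _ = 0 := by rw [hΦv, zero_dotProduct]
    exact hv0 (dotProduct_self_eq_zero.1 hvv)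
  -- transport to Euclidean space and apply the abstract lemma
  set φL : (Fin P → ℝ) ≃ₗ[ℝ] EuclideanSpace ℝ (Fin P) :=
    (WithLp.linearEquiv 2 ℝ (Fin P → ℝ)).symm with hφL
  have hnormφ : ∀ w : Fin P → ℝ, ‖φL w‖ = Real.sqrt (w ⬝ᵥ w) := by
    intro w
    rw [EuclideanSpace.norm_eq]
    congr 1
    simp [hφL, dotProduct, sq, Real.norm_eq_abs, abs_mul_abs_self]
  set eX : ℕ → EuclideanSpace ℝ (Fin P) := fun t => φL (e t) with heX
  set VX : Submodule ℝ (EuclideanSpace ℝ (Fin P)) := V.map (φL : (Fin P → ℝ) →ₗ[ℝ] _) with hVX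
  set MX : EuclideanSpace ℝ (Fin P) →ₗ[ℝ] EuclideanSpace ℝ (Fin P) :=
    (φL : (Fin P → ℝ) →ₗ[ℝ] _) ∘ₗ (epochIter f E) ∘ₗ (φL.symm : _ →ₗ[ℝ] (Fin P → ℝ)) with hMX
  have hMXapp : ∀ w : Fin P → ℝ, MX (φL w) = φL (epochIter f E w) := by
    intro w
    simp [hMX, LinearEquiv.symm_apply_apply]
  have htendX : Tendsto eX atTop (nhds 0) := by
    apply sgd_key hE VX MX eX
    · intro t
      rw [heX]
      simp only []
      rw [hnormφ, hnormφ]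
      apply Real.sqrt_le_sqrt
      rw [hrec']
      refine le_trans (hstepq _ _) ?_
      have := dot_self_nonneg ((A ⟨t % E, Nat.mod_lt t hE⟩) *ᵥ (e t))
      nlinarith [hc0.le]
    · intro k
      rw [heX]
      simp only []
      rw [hepochE k, hMXapp]
    · rw [heX, hVX]
      exact Submodule.mem_map_of_mem h0V
    · intro x hx
      rw [hVX] at hx
      obtain ⟨w, hwV, rfl⟩ := hx
      rw [show ((φL : (Fin P → ℝ) →ₗ[ℝ] _) w) = φL w from rfl, hMXapp]
      rw [hVX]
      exact Submodule.mem_map_of_mem (hiterV E w hwV)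
    · intro x hx hx0
      rw [hVX] at hx
      obtain ⟨w, hwV, rfl⟩ := hx
      have hw0 : w ≠ 0 := by
        intro hw
        apply hx0
        simp [hw]
      rw [show ((φL : (Fin P → ℝ) →ₗ[ℝ] _) w) = φL w from rfl, hMXapp, hnormφ, hnormφ]
      exact Real.sqrt_lt_sqrt (dot_self_nonneg _) (hstrict w hwV hw0)
  have hcont : Continuous (φL.symm : EuclideanSpace ℝ (Fin P) → (Fin P → ℝ)) :=
    (φL.symm : EuclideanSpace ℝ (Fin P) →ₗ[ℝ] (Fin P → ℝ)).continuous_of_finiteDimensional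
  have h5 : Tendsto (fun t => θ t - θI) atTop (nhds 0) := by
    have h6 := (hcont.tendsto 0).comp htendX
    have h7 : (fun t => φL.symm (eX t)) = fun t => θ t - θI := by
      funext t
      simp [heX, he, LinearEquiv.symm_apply_apply]
    rw [Function.comp_def, h7] at h6
    simpa using h6
  have h8 : Tendsto (fun t => (θ t - θI) + θI) atTop (nhds (0 + θI)) := h5.add_const θI
  simpa using h8
end

section
/- Let Φ ∈ ℝ^{N×P} with P ≤ N and ΦᵀΦ ∈ ℝ^{P×P} invertible (underparameterized model), let D ∈ ℝ^{P×P} be symmetric positive definite, Ŷ ∈ ℝ^N, and θ₀ ∈ ℝ^P arbitrary. Consider the adaptive gradient iteration θ_{t+1} = θ_t − (η/N) D Φᵀ(Φθ_t − Ŷ). Then there exists η₀ > 0 such that for all 0 < η < η₀ the iterates converge to θ∞ = (ΦᵀΦ)⁻¹ Φᵀ Ŷ, the unique least-squares minimizer; in particular the limit is independent of both the initialization θ₀ and the adaptive matrix D (and D = I recovers plain gradient descent). -/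
/-!
Put `A = ΦᵀΦ`, positive definite, and `θls = A⁻¹ΦᵀŶ`, which solves the normal equations. The
error `e = θ - θls` then evolves by `e ↦ e - c D A e` with `c = η / N`, and `V e = eᵀ D⁻¹ e` is a
Lyapunov function: one step changes it by `-2c eᵀAe + c² (Ae)ᵀD(Ae)`. In finite dimension all
these quadratic forms are comparable to each other and to `‖e‖²` (compare them on the unit
sphere), so for small `c` each step multiplies `V` by at most some `r < 1`, and `e → 0`.
-/

open Matrix Filter Topology

theorem exists_le_mul_of_sq_homogeneous {E : Type*} [NormedAddCommGroup E] [NormedSpace ℝ E]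
    [ProperSpace E] {f g : E → ℝ}
    (hf : Continuous f) (hg : Continuous g)
    (hf_smul : ∀ (c : ℝ) x, f (c • x) = c ^ 2 * f x)
    (hg_smul : ∀ (c : ℝ) x, g (c • x) = c ^ 2 * g x)
    (hg_pos : ∀ x, x ≠ 0 → 0 < g x) :
    ∃ C > 0, ∀ x, f x ≤ C * g x := by
  have hsphere : ∀ u ∈ Metric.sphere (0 : E) 1, u ≠ 0 := fun u hu =>
    ne_zero_of_mem_sphere one_ne_zero ⟨u, hu⟩
  obtain ⟨K, hK⟩ : ∃ K, ∀ u ∈ Metric.sphere (0 : E) 1, f u / g u ≤ K := by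
    have hcont : ContinuousOn (fun u => f u / g u) (Metric.sphere 0 1) :=
      hf.continuousOn.div hg.continuousOn fun u hu => (hg_pos u (hsphere u hu)).ne'
    obtain ⟨K, hK⟩ := (isCompact_sphere (0 : E) 1).bddAbove_image hcont
    exact ⟨K, fun u hu => hK ⟨u, hu, rfl⟩⟩
  refine ⟨max K 1, lt_max_of_lt_right one_pos, fun x => ?_⟩
  rcases eq_or_ne x 0 with rfl | hx
  · have hf0 : f 0 = 0 := by simpa using hf_smul 0 0
    have hg0 : g 0 = 0 := by simpa using hg_smul 0 0
    simp [hf0, hg0]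
  have hxn : ‖x‖ ≠ 0 := norm_ne_zero_iff.2 hx
  set u := ‖x‖⁻¹ • x
  have hu : u ∈ Metric.sphere (0 : E) 1 := by simp [u, norm_smul, hxn]
  have hxu : x = ‖x‖ • u := by simp [u, smul_smul, hxn]
  have hfu : f u ≤ max K 1 * g u :=
    (div_le_iff₀ (hg_pos u (hsphere u hu))).1 ((hK u hu).trans (le_max_left _ _))
  rw [hxu, hf_smul, hg_smul]
  nlinarith [sq_nonneg ‖x‖]

theorem tendsto_zero_of_geometric_decay {E : Type*} [SeminormedAddGroup E] {V : E → ℝ}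
    {C r : ℝ} (hC : 0 ≤ C) (hr₀ : 0 ≤ r) (hr₁ : r < 1) (hV : ∀ x, ‖x‖ ^ 2 ≤ C * V x) {e : ℕ → E}
    (he : ∀ t, V (e (t + 1)) ≤ r * V (e t)) : Tendsto e atTop (𝓝 0) := by
  have hdecay : ∀ t, V (e t) ≤ r ^ t * V (e 0) := by
    intro t
    induction t with
    | zero => simp
    | succ t ih =>
      calc V (e (t + 1)) ≤ r * V (e t) := he t
        _ ≤ r * (r ^ t * V (e 0)) := mul_le_mul_of_nonneg_left ih hr₀
        _ = r ^ (t + 1) * V (e 0) := by ring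
  have hsq : Tendsto (fun t => ‖e t‖ ^ 2) atTop (𝓝 0) := by
    refine squeeze_zero (fun t => by positivity)
      (fun t => (hV _).trans (mul_le_mul_of_nonneg_left (hdecay t) hC)) ?_
    simpa using ((tendsto_pow_atTop_nhds_zero_of_lt_one hr₀ hr₁).mul_const (V (e 0))).const_mul C
  rw [tendsto_zero_iff_norm_tendsto_zero]
  simpa [Real.sqrt_sq (norm_nonneg _)] using hsq.sqrt

namespace Matrix

variable {n : Type*} [Fintype n]

theorem continuous_dotProduct_mulVec_self (M : Matrix n n ℝ) :
    Continuous fun x : n → ℝ => x ⬝ᵥ (M *ᵥ x) :=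
  continuous_id.dotProduct (continuous_const.matrix_mulVec continuous_id)

theorem smul_dotProduct_mulVec_smul (M : Matrix n n ℝ) (c : ℝ) (x : n → ℝ) :
    (c • x) ⬝ᵥ (M *ᵥ (c • x)) = c ^ 2 * (x ⬝ᵥ (M *ᵥ x)) := by
  simp only [mulVec_smul, smul_dotProduct, dotProduct_smul, smul_eq_mul]
  ring

namespace PosDef

variable {S : Matrix n n ℝ}

theorem dotProduct_mulVec_self_pos (hS : S.PosDef) {x : n → ℝ} (hx : x ≠ 0) :
    0 < x ⬝ᵥ (S *ᵥ x) := by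
  simpa using hS.dotProduct_mulVec_pos hx

theorem exists_dotProduct_mulVec_le_mul (hS : S.PosDef) (M : Matrix n n ℝ) :
    ∃ C > 0, ∀ x, x ⬝ᵥ (M *ᵥ x) ≤ C * (x ⬝ᵥ (S *ᵥ x)) :=
  exists_le_mul_of_sq_homogeneous (continuous_dotProduct_mulVec_self M)
    (continuous_dotProduct_mulVec_self S) (smul_dotProduct_mulVec_smul M)
    (smul_dotProduct_mulVec_smul S) fun _ => hS.dotProduct_mulVec_self_pos

theorem exists_sq_norm_le_mul (hS : S.PosDef) :
    ∃ C > 0, ∀ x : n → ℝ, ‖x‖ ^ 2 ≤ C * (x ⬝ᵥ (S *ᵥ x)) :=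
  exists_le_mul_of_sq_homogeneous (continuous_norm.pow 2) (continuous_dotProduct_mulVec_self S)
    (fun c x => by rw [norm_smul, mul_pow, Real.norm_eq_abs, sq_abs])
    (smul_dotProduct_mulVec_smul S) fun _ => hS.dotProduct_mulVec_self_pos

end PosDef

theorem posDef_transpose_mul_self_of_isUnit_det {m : Type*} [Fintype m] [DecidableEq n]
    {Φ : Matrix m n ℝ} (h : IsUnit (Φᵀ * Φ).det) : (Φᵀ * Φ).PosDef := by
  have hinj : Function.Injective Φ.mulVec := by
    have hcomp := mulVec_injective_iff_isUnit.2 ((isUnit_iff_isUnit_det _).2 h)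
    rw [show (Φᵀ * Φ).mulVec = Φᵀ.mulVec ∘ Φ.mulVec from
      funext fun v => (mulVec_mulVec v _ _).symm] at hcomp
    exact hcomp.of_comp
  simpa [conjTranspose_eq_transpose_of_trivial] using PosDef.conjTranspose_mul_self Φ hinj

variable [DecidableEq n] {D A : Matrix n n ℝ}

theorem dotProduct_inv_mulVec_preconditioned_step (hD : D.PosDef) (c : ℝ) (x : n → ℝ) :
    (x - c • (D * A) *ᵥ x) ⬝ᵥ (D⁻¹ *ᵥ (x - c • (D * A) *ᵥ x)) =
      x ⬝ᵥ (D⁻¹ *ᵥ x) - 2 * c * (x ⬝ᵥ (A *ᵥ x)) + c ^ 2 * (x ⬝ᵥ ((Aᵀ * D * A) *ᵥ x)) := by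
  have hDsymm : Dᵀ = D := by simpa [IsHermitian, conjTranspose_eq_transpose_of_trivial] using hD.1
  have hdet : IsUnit D.det := hD.det_pos.ne'.isUnit
  have hDinv : D⁻¹ *ᵥ ((D * A) *ᵥ x) = A *ᵥ x := by
    rw [mulVec_mulVec, ← Matrix.mul_assoc, nonsing_inv_mul _ hdet, Matrix.one_mul]
  have hcross : ((D * A) *ᵥ x) ⬝ᵥ (D⁻¹ *ᵥ x) = x ⬝ᵥ (A *ᵥ x) := by
    rw [dotProduct_comm, ← mulVec_mulVec, dotProduct_mulVec, ← mulVec_transpose, hDsymm,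
      mulVec_mulVec, mul_nonsing_inv _ hdet, one_mulVec]
  have hquad : ((D * A) *ᵥ x) ⬝ᵥ (A *ᵥ x) = x ⬝ᵥ ((Aᵀ * D * A) *ᵥ x) := by
    rw [dotProduct_comm, Matrix.mul_assoc, ← mulVec_mulVec, ← mulVec_mulVec, ← mulVec_mulVec,
      dotProduct_mulVec x Aᵀ, vecMul_transpose]
  rw [mulVec_sub, mulVec_smul, hDinv]
  simp only [sub_dotProduct, dotProduct_sub, smul_dotProduct, dotProduct_smul, smul_eq_mul,
    hcross, hquad]
  ring

theorem preconditioned_step_contracts (hD : D.PosDef) (hA : A.PosDef) {C₁ C₂ c : ℝ}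
    (hC₂ : 0 < C₂) (h₁ : ∀ x, x ⬝ᵥ ((Aᵀ * D * A) *ᵥ x) ≤ C₁ * (x ⬝ᵥ (A *ᵥ x)))
    (h₂ : ∀ x, x ⬝ᵥ (D⁻¹ *ᵥ x) ≤ C₂ * (x ⬝ᵥ (A *ᵥ x))) (hc : 0 ≤ c) (hcC₁ : c * C₁ ≤ 1)
    (x : n → ℝ) :
    (x - c • (D * A) *ᵥ x) ⬝ᵥ (D⁻¹ *ᵥ (x - c • (D * A) *ᵥ x)) ≤
      (1 - c / C₂) * (x ⬝ᵥ (D⁻¹ *ᵥ x)) := by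
  have hq : 0 ≤ x ⬝ᵥ (A *ᵥ x) := by simpa using hA.posSemidef.dotProduct_mulVec_nonneg x
  have hquad : c ^ 2 * (x ⬝ᵥ ((Aᵀ * D * A) *ᵥ x)) ≤ c * (x ⬝ᵥ (A *ᵥ x)) :=
    calc c ^ 2 * (x ⬝ᵥ ((Aᵀ * D * A) *ᵥ x))
      _ ≤ c ^ 2 * (C₁ * (x ⬝ᵥ (A *ᵥ x))) := by gcongr; exact h₁ x
      _ = c * (c * C₁) * (x ⬝ᵥ (A *ᵥ x)) := by ring
      _ ≤ c * 1 * (x ⬝ᵥ (A *ᵥ x)) := by gcongr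
      _ = c * (x ⬝ᵥ (A *ᵥ x)) := by ring
  have henergy : c / C₂ * (x ⬝ᵥ (D⁻¹ *ᵥ x)) ≤ c * (x ⬝ᵥ (A *ᵥ x)) := by
    calc c / C₂ * (x ⬝ᵥ (D⁻¹ *ᵥ x))
      _ ≤ c / C₂ * (C₂ * (x ⬝ᵥ (A *ᵥ x))) := by gcongr; exact h₂ x
      _ = c * (x ⬝ᵥ (A *ᵥ x)) := by field_simp
  rw [dotProduct_inv_mulVec_preconditioned_step hD]
  linarith

theorem PosDef.exists_tendsto_preconditioned_iterate (hD : D.PosDef) (hA : A.PosDef) :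
    ∃ c₀ > 0, ∀ c : ℝ, 0 < c → c < c₀ → ∀ e : ℕ → n → ℝ,
      (∀ t, e (t + 1) = e t - c • (D * A) *ᵥ e t) → Tendsto e atTop (𝓝 0) := by
  obtain ⟨C₁, hC₁, h₁⟩ := hA.exists_dotProduct_mulVec_le_mul (Aᵀ * D * A)
  obtain ⟨C₂, hC₂, h₂⟩ := hA.exists_dotProduct_mulVec_le_mul D⁻¹
  obtain ⟨C₃, hC₃, h₃⟩ := hD.inv.exists_sq_norm_le_mul
  refine ⟨min C₁⁻¹ C₂, by positivity, fun c hc hcc₀ e he => ?_⟩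
  obtain ⟨hcC₁, hcC₂⟩ := lt_min_iff.1 hcc₀
  have hcC₁ : c * C₁ ≤ 1 := by
    simpa [hC₁.ne'] using (mul_lt_mul_of_pos_right hcC₁ hC₁).le
  refine tendsto_zero_of_geometric_decay (r := 1 - c / C₂) hC₃.le ?_ ?_ h₃ fun t => ?_
  · exact sub_nonneg.2 ((div_le_one hC₂).2 hcC₂.le)
  · exact sub_lt_self _ (div_pos hc hC₂)
  · rw [he t]
    exact preconditioned_step_contracts hD hA hC₂ h₁ h₂ hc.le hcC₁ (e t)

end Matrix

theorem underparam_unique_minimizer_general {N P : ℕ} (hN : 0 < N)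
    (Φ : Matrix (Fin N) (Fin P) ℝ) (hinv : IsUnit (Φᵀ * Φ).det)
    (D : Matrix (Fin P) (Fin P) ℝ) (hD : D.PosDef)
    (Yhat : Fin N → ℝ) (θ₀ : Fin P → ℝ) :
    ∃ η₀ > 0, ∀ η : ℝ, 0 < η → η < η₀ →
      ∀ θ : ℕ → Fin P → ℝ, θ 0 = θ₀ →
        (∀ t, θ (t + 1) = θ t - (η / N) • (D * Φᵀ).mulVec (Φ.mulVec (θ t) - Yhat)) →
        Tendsto θ atTop (nhds (((Φᵀ * Φ)⁻¹ * Φᵀ).mulVec Yhat)) := by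
  have hNpos : (0 : ℝ) < N := Nat.cast_pos.2 hN
  obtain ⟨c₀, hc₀, hconv⟩ :=
    hD.exists_tendsto_preconditioned_iterate (posDef_transpose_mul_self_of_isUnit_det hinv)
  refine ⟨N * c₀, by positivity, fun η hη hηc₀ θ _ hθ => ?_⟩
  set θls := ((Φᵀ * Φ)⁻¹ * Φᵀ) *ᵥ Yhat
  have hnormal : Φᵀ *ᵥ (Φ *ᵥ θls) = Φᵀ *ᵥ Yhat := by
    rw [mulVec_mulVec, mulVec_mulVec, ← Matrix.mul_assoc, mul_nonsing_inv _ hinv, Matrix.one_mul]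
  have hgrad : ∀ v, (D * Φᵀ) *ᵥ (Φ *ᵥ v - Yhat) = (D * (Φᵀ * Φ)) *ᵥ (v - θls) := fun v => by
    simp only [← mulVec_mulVec, mulVec_sub, hnormal]
  have hlt : η / N < c₀ := by rw [div_lt_iff₀ hNpos]; linarith
  have herr := hconv (η / N) (by positivity) hlt (fun t => θ t - θls) fun t => by
    rw [hθ t, hgrad, sub_right_comm]
  simpa using herr.add_const θls

/-- **Underparameterized models have a unique, method-independent minimizer.**
If `P ≤ N`, `ΦᵀΦ` is invertible and `D` is symmetric positive definite, then for all
sufficiently small `η > 0` the adaptive iterates `θ_{t+1} = θ_t − (η/N) D Φᵀ(Φθ_t − Yhat)`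
converge to the unique least-squares minimizer `θ∞ = (ΦᵀΦ)⁻¹ΦᵀYhat`, independently of the
initialization `θ₀` and of the adaptive matrix `D`. -/
theorem underparam_unique_minimizer {N P : ℕ} (hPN : P ≤ N) (hN : 0 < N)
    (Φ : Matrix (Fin N) (Fin P) ℝ) (hinv : IsUnit (Φᵀ * Φ).det)
    (D : Matrix (Fin P) (Fin P) ℝ) (hD : D.PosDef)
    (Yhat : Fin N → ℝ) (θ₀ : Fin P → ℝ) :
    ∃ η₀ > 0, ∀ η : ℝ, 0 < η → η < η₀ →
      ∀ θ : ℕ → Fin P → ℝ, θ 0 = θ₀ →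
        (∀ t, θ (t + 1) = θ t - (η / N) • (D * Φᵀ).mulVec (Φ.mulVec (θ t) - Yhat)) →
        Tendsto θ atTop (nhds (((Φᵀ * Φ)⁻¹ * Φᵀ).mulVec Yhat)) :=
  underparam_unique_minimizer_general hN Φ hinv D hD Yhat θ₀
end
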